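/- arXiv:0811.3479 — 2 statements merged into one kernel-verified Lean document; each statement's English description precedes it below -/
import Mathlib

section
/- Refined recurrence singling out one prime: let n ≥ 2 be a natural number, let p₁ be a prime dividing n, and let n₁ be the multiplicity of p₁ in n. Then in ℚ: p*(n) · n₁ = ∑_{d ∣ n, p₁ ∣ d} r₁(d) · λ(d) · p*(n / d), where r₁(d) denotes the multiplicity of p₁ in d, c(d) is the greatest common divisor of the exponents appearing in the prime factorization of d, and λ(d) = ∑_{i ∣ c(d)} 1/i. -/
/-!
Double count the pairs (factorization `s` of `n`, copy of a part `m` in `s`), each weighted by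
`f m` for a completely additive `f`. Summing over `s` first gives `p*(n) f(n)`. The
factorizations containing `k` copies of `m` are those of `n / m^k` with `k` copies of `m`
adjoined, so summing over `(m, k)` first gives `∑ f(m) p*(n / m^k)`. Grouping by `d = m^k`, the
admissible `k` are exactly the divisors of `c(d)`, and `f(m) = f(d) / k`, which produces `λ(d)`.
For `f = v_{p₁}` the terms with `p₁ ∤ d` vanish.
-/

noncomputable def numFactorizations (m : ℕ) : ℕ :=
  Nat.card {s : Multiset ℕ // (∀ x ∈ s, 2 ≤ x) ∧ s.prod = m}

def expGcd (d : ℕ) : ℕ :=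
  d.primeFactors.gcd fun p => d.factorization p

noncomputable def lam (d : ℕ) : ℚ :=
  ∑ i ∈ (expGcd d).divisors, (1 : ℚ) / i

open Finset

theorem Multiset.card_lt_prod_of_two_le {s : Multiset ℕ} (hs : ∀ x ∈ s, 2 ≤ x) :
    Multiset.card s < s.prod :=
  Nat.lt_two_pow_self.trans_le (Multiset.pow_card_le_prod hs)

theorem Multiset.le_nsmul_range_prod {s : Multiset ℕ} (hs : ∀ x ∈ s, 2 ≤ x) :
    s ≤ s.prod • Multiset.range (s.prod + 1) := by
  have hcard := Multiset.card_lt_prod_of_two_le hs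
  refine Multiset.le_iff_count.2 fun a => ?_
  by_cases ha : a ∈ s
  · have hle : a ≤ s.prod := Nat.le_of_dvd (by omega) (Multiset.dvd_prod ha)
    rw [Multiset.count_nsmul, Multiset.count_eq_one_of_mem (Multiset.nodup_range _)
      (Multiset.mem_range.2 (Nat.lt_succ_of_le hle)), mul_one]
    exact (Multiset.count_le_card a s).trans hcard.le
  · simp [Multiset.count_eq_zero_of_notMem ha]

def factorizations (m : ℕ) : Finset (Multiset ℕ) :=
  {s ∈ (m • Multiset.range (m + 1)).powerset.toFinset | (∀ x ∈ s, 2 ≤ x) ∧ s.prod = m}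

theorem mem_factorizations {m : ℕ} {s : Multiset ℕ} :
    s ∈ factorizations m ↔ (∀ x ∈ s, 2 ≤ x) ∧ s.prod = m := by
  rw [factorizations, mem_filter, Multiset.mem_toFinset, Multiset.mem_powerset,
    and_iff_right_iff_imp]
  rintro ⟨hs, rfl⟩
  exact Multiset.le_nsmul_range_prod hs

theorem numFactorizations_eq_card (m : ℕ) : numFactorizations m = #(factorizations m) := by
  rw [numFactorizations, ← Nat.card_eq_finsetCard]
  exact Nat.card_congr (Equiv.subtypeEquivRight fun _ => mem_factorizations.symm)

theorem card_filter_replicate_le_factorizations {n m k : ℕ} (hm : 2 ≤ m) (hdvd : m ^ k ∣ n) :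
    #{s ∈ factorizations n | Multiset.replicate k m ≤ s} = numFactorizations (n / m ^ k) := by
  have hmk : 0 < m ^ k := pow_pos (by omega) k
  rw [numFactorizations_eq_card]
  refine card_nbij' (· - Multiset.replicate k m) (· + Multiset.replicate k m) ?_ ?_ ?_ ?_
  · intro s hs
    rw [mem_coe, mem_filter, mem_factorizations] at hs
    obtain ⟨⟨hparts, rfl⟩, hle⟩ := hs
    refine mem_factorizations.2 ⟨fun x hx => hparts x (Multiset.mem_of_le tsub_le_self hx), ?_⟩
    refine (Nat.div_eq_of_eq_mul_left hmk ?_).symm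
    rw [← Multiset.prod_replicate, ← Multiset.prod_add, tsub_add_cancel_of_le hle]
  · intro t ht
    obtain ⟨hparts, htn⟩ := mem_factorizations.1 ht
    rw [mem_coe, mem_filter, mem_factorizations]
    refine ⟨⟨fun x hx => ?_, ?_⟩, Multiset.le_add_left _ _⟩
    · rcases Multiset.mem_add.1 hx with hx | hx
      · exact hparts x hx
      · rwa [Multiset.eq_of_mem_replicate hx]
    · rw [Multiset.prod_add, htn, Multiset.prod_replicate, Nat.div_mul_cancel hdvd]
  · intro s hs
    exact tsub_add_cancel_of_le (mem_filter.1 hs).2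
  · intro t _
    exact add_tsub_cancel_right _ _

/-- The exponent is `i + 1`, matching `Multiset.toEnumFinset`, where `(m, i)` is the
`(i + 1)`-st copy of `m`. -/
def powerDivisors (n : ℕ) : Finset (ℕ × ℕ) :=
  {q ∈ n.divisors ×ˢ range n | 2 ≤ q.1 ∧ q.1 ^ (q.2 + 1) ∣ n}

theorem mem_powerDivisors {n : ℕ} {q : ℕ × ℕ} :
    q ∈ powerDivisors n ↔ n ≠ 0 ∧ 2 ≤ q.1 ∧ q.1 ^ (q.2 + 1) ∣ n := by
  rw [powerDivisors, mem_filter, mem_product, Nat.mem_divisors, mem_range]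
  constructor
  · rintro ⟨⟨⟨_, hn⟩, _⟩, h⟩
    exact ⟨hn, h⟩
  · rintro ⟨hn, hm, hdvd⟩
    have hpow : 2 ^ (q.2 + 1) ≤ n :=
      (Nat.pow_le_pow_left hm _).trans (Nat.le_of_dvd (Nat.pos_of_ne_zero hn) hdvd)
    have hi : q.2 + 1 < 2 ^ (q.2 + 1) := Nat.lt_two_pow_self
    exact ⟨⟨⟨(dvd_pow_self _ q.2.succ_ne_zero).trans hdvd, hn⟩, by omega⟩, hm, hdvd⟩

theorem Multiset.sum_toEnumFinset_fst {α M : Type*} [DecidableEq α] [AddCommMonoid M]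
    (s : Multiset α) (f : α → M) : ∑ q ∈ s.toEnumFinset, f q.1 = (s.map f).sum := by
  rw [← sum_map_val, ← Function.comp_def f Prod.fst, ← Multiset.map_map,
    Multiset.map_toEnumFinset_fst]

theorem sum_factorizations_sum_map {M : Type*} [AddCommMonoid M] (f : ℕ → M) (n : ℕ) :
    ∑ s ∈ factorizations n, (s.map f).sum =
      ∑ q ∈ powerDivisors n, numFactorizations (n / q.1 ^ (q.2 + 1)) • f q.1 := by
  calc ∑ s ∈ factorizations n, (s.map f).sum
      = ∑ s ∈ factorizations n, ∑ q ∈ s.toEnumFinset, f q.1 := by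
        simp only [Multiset.sum_toEnumFinset_fst]
    _ = ∑ q ∈ powerDivisors n,
          ∑ s ∈ factorizations n with Multiset.replicate (q.2 + 1) q.1 ≤ s, f q.1 := by
        refine sum_comm' fun s q => ?_
        rw [mem_filter, Multiset.mem_toEnumFinset, Nat.lt_iff_add_one_le,
          Multiset.le_count_iff_replicate_le, mem_powerDivisors, mem_factorizations]
        constructor
        · rintro ⟨⟨hs, rfl⟩, hle⟩
          have hprod := Multiset.prod_dvd_prod_of_le hle
          rw [Multiset.prod_replicate] at hprod
          exact ⟨⟨⟨hs, rfl⟩, hle⟩, (Multiset.card_lt_prod_of_two_le hs).ne_bot,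
            hs _ (Multiset.mem_of_le hle (Multiset.mem_replicate.2 ⟨by omega, rfl⟩)), hprod⟩
        · exact fun h => h.1
    _ = ∑ q ∈ powerDivisors n, numFactorizations (n / q.1 ^ (q.2 + 1)) • f q.1 := by
        refine sum_congr rfl fun q hq => ?_
        obtain ⟨-, hm, hdvd⟩ := mem_powerDivisors.1 hq
        rw [sum_const, card_filter_replicate_le_factorizations hm hdvd]

theorem Nat.exists_pow_eq_of_forall_dvd_factorization {d k : ℕ} (hd : d ≠ 0)
    (h : ∀ p, k ∣ d.factorization p) : ∃ m, m ^ k = d := by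
  refine ⟨∏ p ∈ d.primeFactors, p ^ (d.factorization p / k), ?_⟩
  rw [← prod_pow]
  conv_rhs =>
    rw [← Nat.prod_factorization_pow_eq_self hd, Nat.prod_factorization_eq_prod_primeFactors]
  exact prod_congr rfl fun p _ => by rw [← pow_mul, Nat.div_mul_cancel (h p)]

theorem dvd_expGcd_iff {d k : ℕ} (hd : d ≠ 0) : k ∣ expGcd d ↔ ∃ m, m ^ k = d := by
  rw [expGcd, Finset.dvd_gcd_iff]
  constructor
  · refine fun h => Nat.exists_pow_eq_of_forall_dvd_factorization hd fun p => ?_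
    by_cases hp : p ∈ d.primeFactors
    · exact h p hp
    · rw [← Nat.support_factorization, Finsupp.notMem_support_iff] at hp
      rw [hp]
      exact dvd_zero k
  · rintro ⟨m, rfl⟩ p _
    rw [Nat.factorization_pow, Finsupp.smul_apply, smul_eq_mul]
    exact dvd_mul_right k _

theorem expGcd_eq_zero_iff {d : ℕ} (hd : d ≠ 0) : expGcd d = 0 ↔ d = 1 := by
  simpa [eq_comm] using dvd_expGcd_iff (k := 0) hd

theorem sum_powerDivisors_eq_sum_divisors_sum_divisors_expGcd {M : Type*} [AddCommMonoid M]
    (n : ℕ) (g : ℕ → ℕ → M) :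
    ∑ q ∈ powerDivisors n, g (q.1 ^ (q.2 + 1)) (q.2 + 1) =
      ∑ d ∈ n.divisors, ∑ k ∈ (expGcd d).divisors, g d k := by
  rw [sum_sigma']
  refine sum_nbij (fun q => ⟨q.1 ^ (q.2 + 1), q.2 + 1⟩) ?_ ?_ ?_ fun _ _ => rfl
  · intro q hq
    obtain ⟨hn, hm, hdvd⟩ := mem_powerDivisors.1 hq
    have hpow : q.1 ^ (q.2 + 1) ≠ 0 := pow_ne_zero _ (by omega)
    simp only [mem_sigma, Nat.mem_divisors, ne_eq]
    rw [expGcd_eq_zero_iff hpow, dvd_expGcd_iff hpow, Nat.pow_eq_one]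
    exact ⟨⟨hdvd, hn⟩, ⟨q.1, rfl⟩, by omega⟩
  · rintro ⟨m, i⟩ _ ⟨m', i'⟩ _ h
    simp only [Sigma.mk.injEq, add_left_inj, heq_eq_eq] at h
    obtain ⟨hpow, rfl⟩ := h
    rw [Prod.mk.injEq]
    exact ⟨Nat.pow_left_injective i.succ_ne_zero hpow, rfl⟩
  · rintro ⟨d, k⟩ hdk
    simp only [mem_coe, mem_sigma, Nat.mem_divisors] at hdk
    obtain ⟨⟨hdvd, hn⟩, hk, hgcd⟩ := hdk
    have hd : d ≠ 0 := ne_zero_of_dvd_ne_zero hn hdvd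
    obtain ⟨m, rfl⟩ := (dvd_expGcd_iff hd).1 hk
    obtain ⟨i, rfl⟩ : ∃ i, k = i + 1 :=
      Nat.exists_eq_succ_of_ne_zero fun h => hgcd (by rw [expGcd_eq_zero_iff hd, h, pow_zero])
    have hm : 2 ≤ m := by
      rw [Ne, expGcd_eq_zero_iff hd, Nat.pow_eq_one] at hgcd
      rcases m with _ | _ | m
      · simp at hd
      · simp at hgcd
      · omega
    exact ⟨(m, i), mem_powerDivisors.2 ⟨hn, hm, hdvd⟩, rfl⟩

section Additive

variable {M : Type*} [AddCancelCommMonoid M] {f : ℕ → M}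

theorem map_multiset_prod_of_additive (hf : ∀ a b, a ≠ 0 → b ≠ 0 → f (a * b) = f a + f b)
    {s : Multiset ℕ} (hs : 0 ∉ s) : f s.prod = (s.map f).sum := by
  induction s using Multiset.induction_on with
  | empty => simpa using hf 1 1 one_ne_zero one_ne_zero
  | cons a s ih =>
    rw [Multiset.mem_cons, not_or] at hs
    rw [Multiset.prod_cons, hf _ _ (Ne.symm hs.1) (Multiset.prod_ne_zero hs.2), ih hs.2,
      Multiset.map_cons, Multiset.sum_cons]

theorem map_pow_of_additive (hf : ∀ a b, a ≠ 0 → b ≠ 0 → f (a * b) = f a + f b)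
    {m : ℕ} (hm : m ≠ 0) (k : ℕ) : f (m ^ k) = k • f m := by
  have h0 : 0 ∉ Multiset.replicate k m := fun h => hm (Multiset.eq_of_mem_replicate h).symm
  rw [← Multiset.prod_replicate, map_multiset_prod_of_additive hf h0, Multiset.map_replicate,
    Multiset.sum_replicate]

end Additive

theorem numFactorizations_mul_eq_sum_divisors (f : ℕ → ℚ)
    (hf : ∀ a b, a ≠ 0 → b ≠ 0 → f (a * b) = f a + f b) (n : ℕ) :
    numFactorizations n * f n = ∑ d ∈ n.divisors, f d * lam d * numFactorizations (n / d) := by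
  calc (numFactorizations n : ℚ) * f n
      = ∑ s ∈ factorizations n, (s.map f).sum := by
        rw [numFactorizations_eq_card, ← nsmul_eq_mul, ← sum_const]
        refine sum_congr rfl fun s hs => ?_
        obtain ⟨hparts, rfl⟩ := mem_factorizations.1 hs
        exact map_multiset_prod_of_additive hf fun h0 => by simpa using hparts 0 h0
    _ = ∑ q ∈ powerDivisors n, numFactorizations (n / q.1 ^ (q.2 + 1)) • f q.1 :=
        sum_factorizations_sum_map f n
    _ = ∑ q ∈ powerDivisors n,
          f (q.1 ^ (q.2 + 1)) / (q.2 + 1 : ℕ) * numFactorizations (n / q.1 ^ (q.2 + 1)) := by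
        refine sum_congr rfl fun q hq => ?_
        obtain ⟨-, hm, -⟩ := mem_powerDivisors.1 hq
        rw [map_pow_of_additive hf (by omega), nsmul_eq_mul, nsmul_eq_mul]
        field_simp
    _ = ∑ d ∈ n.divisors, ∑ k ∈ (expGcd d).divisors, f d / k * numFactorizations (n / d) :=
        sum_powerDivisors_eq_sum_divisors_sum_divisors_expGcd n
          fun d k => f d / k * numFactorizations (n / d)
    _ = ∑ d ∈ n.divisors, f d * lam d * numFactorizations (n / d) := by
        refine sum_congr rfl fun d _ => ?_
        rw [lam, mul_sum, sum_mul]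
        exact sum_congr rfl fun k _ => by ring

theorem stmt10_general (n : ℕ) (p₁ : ℕ) (n₁ : ℕ) (hn₁ : n₁ = n.factorization p₁) :
    (numFactorizations n : ℚ) * (n₁ : ℚ) =
      ∑ d ∈ n.divisors.filter (p₁ ∣ ·),
        (d.factorization p₁ : ℚ) * lam d * numFactorizations (n / d) := by
  subst hn₁
  have hadd : ∀ a b, a ≠ 0 → b ≠ 0 →
      ((a * b).factorization p₁ : ℚ) = a.factorization p₁ + b.factorization p₁ :=
    fun a b ha hb => by rw [Nat.factorization_mul ha hb, Finsupp.add_apply, Nat.cast_add]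
  rw [numFactorizations_mul_eq_sum_divisors (fun m => (m.factorization p₁ : ℚ)) hadd,
    sum_filter_of_ne]
  intro d _ hd
  by_contra hp
  simp [Nat.factorization_eq_zero_of_not_dvd hp] at hd

/-- Refined recurrence singling out one prime: for `n ≥ 2`, a
prime `p₁ ∣ n` with multiplicity `n₁`,
`p*(n) · n₁ = ∑_{d ∣ n, p₁ ∣ d} r₁(d) · λ(d) · p*(n / d)` in `ℚ`, where `r₁(d)` is
the multiplicity of `p₁` in `d`. -/
theorem stmt10 (n : ℕ) (hn : 2 ≤ n) (p₁ : ℕ) (hp₁ : p₁.Prime) (hdvd : p₁ ∣ n)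
    (n₁ : ℕ) (hn₁ : n₁ = n.factorization p₁) :
    (numFactorizations n : ℚ) * (n₁ : ℚ) =
      ∑ d ∈ n.divisors.filter (p₁ ∣ ·),
        (d.factorization p₁ : ℚ) * lam d * numFactorizations (n / d) :=
  stmt10_general n p₁ n₁ hn₁
end

section
/- Let p and q be distinct prime numbers and n a natural number. Then p*(p · q^n) = ∑_{i=0}^{n} p(i), where p(i) is the number of partitions of i (with p(0) = 1). -/
theorem Multiset.prod_map_pow_eq_pow_sum {M : Type*} [CommMonoid M] (a : M) (s : Multiset ℕ) :
    (s.map (a ^ ·)).prod = a ^ s.sum :=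
  Multiset.induction_on s (by simp) fun _ _ ih => by simp [ih, pow_add]

theorem Nat.Prime.pow_factorization_eq_of_dvd_pow {q z m : ℕ} (hq : q.Prime) (hz : z ∣ q ^ m) :
    q ^ z.factorization q = z := by
  obtain ⟨e, -, rfl⟩ := (Nat.dvd_prime_pow hq).mp hz
  simp [hq.factorization_pow]

def UnorderedFactorization (m : ℕ) : Type :=
  {s : Multiset ℕ // (∀ x ∈ s, 2 ≤ x) ∧ s.prod = m}

namespace UnorderedFactorization

variable {m : ℕ}

theorem card_eq_numFactorizations (m : ℕ) :
    Nat.card (UnorderedFactorization m) = numFactorizations m := rfl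

theorem card_le (s : UnorderedFactorization m) : Multiset.card s.1 ≤ m :=
  calc Multiset.card s.1 ≤ 2 ^ Multiset.card s.1 := Nat.lt_two_pow_self.le
    _ ≤ s.1.prod := Multiset.pow_card_le_prod s.2.1
    _ = m := s.2.2

theorem pos (s : UnorderedFactorization m) : 0 < m :=
  s.2.2 ▸ Nat.lt_of_lt_of_le (Nat.two_pow_pos _) (Multiset.pow_card_le_prod s.2.1)

theorem le_of_mem (s : UnorderedFactorization m) {x : ℕ} (hx : x ∈ s.1) : x ≤ m :=
  Nat.le_of_dvd s.pos (s.2.2 ▸ Multiset.dvd_prod hx)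

theorem le_nsmul_range (s : UnorderedFactorization m) : s.1 ≤ m • Multiset.range (m + 1) := by
  rw [Multiset.le_iff_count]
  intro x
  by_cases hx : x ∈ s.1
  · rw [Multiset.count_nsmul, Multiset.count_eq_one_of_mem (Multiset.nodup_range _)
      (Multiset.mem_range.2 (Nat.lt_succ_of_le (le_of_mem s hx))), mul_one]
    exact (Multiset.count_le_card _ _).trans (card_le s)
  · simp [Multiset.count_eq_zero_of_notMem hx]

instance (m : ℕ) : Finite (UnorderedFactorization m) :=
  Finite.of_injective
    (fun s => (⟨s.1, le_nsmul_range s⟩ : {t // t ≤ m • Multiset.range (m + 1)}))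
    fun _ _ h => Subtype.ext (Subtype.mk.inj h)

theorem map_pow_factorization {q : ℕ} (hq : q.Prime) (s : UnorderedFactorization (q ^ m)) :
    (s.1.map (·.factorization q)).map (q ^ ·) = s.1 := by
  rw [Multiset.map_map]
  conv_rhs => rw [← Multiset.map_id s.1]
  exact Multiset.map_congr rfl fun x hx =>
    hq.pow_factorization_eq_of_dvd_pow (s.2.2 ▸ Multiset.dvd_prod hx)

def primePowEquivPartition {q : ℕ} (hq : q.Prime) (m : ℕ) :
    UnorderedFactorization (q ^ m) ≃ Nat.Partition m where
  toFun s :=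
    { parts := s.1.map (·.factorization q)
      parts_pos := by
        simp only [Multiset.mem_map, forall_exists_index, and_imp]
        rintro _ x hx rfl
        refine Nat.pos_of_ne_zero fun h0 => ?_
        have hx2 := s.2.1 x hx
        have hxq : x ∣ q ^ m := s.2.2 ▸ Multiset.dvd_prod hx
        rw [← hq.pow_factorization_eq_of_dvd_pow hxq, h0] at hx2
        simp at hx2
      parts_sum := by
        apply Nat.pow_right_injective hq.two_le
        simp only [← Multiset.prod_map_pow_eq_pow_sum, map_pow_factorization hq s, s.2.2] }
  invFun π :=
    ⟨π.parts.map (q ^ ·), by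
      simp only [Multiset.mem_map, forall_exists_index, and_imp]
      rintro _ i hi rfl
      exact hq.two_le.trans (Nat.le_self_pow (π.parts_pos hi).ne' q),
      by rw [Multiset.prod_map_pow_eq_pow_sum, π.parts_sum]⟩
  left_inv s := Subtype.ext (map_pow_factorization hq s)
  right_inv π := by
    ext1
    simp [hq.factorization_pow]

section MulPrime

variable {p : ℕ} (hp : p.Prime)

def consMulPrime (d : m.divisors) (t : UnorderedFactorization (m / d)) :
    UnorderedFactorization (p * m) :=
  ⟨(p * d) ::ₘ t.1, by
    simp only [Multiset.mem_cons, forall_eq_or_imp]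
    exact ⟨hp.two_le.trans (Nat.le_mul_of_pos_right p (Nat.pos_of_mem_divisors d.2)), t.2.1⟩, by
    rw [Multiset.prod_cons, t.2.2, mul_assoc, Nat.mul_div_cancel' (Nat.dvd_of_mem_divisors d.2)]⟩

include hp in
theorem consMulPrime_injective (hpm : ¬p ∣ m) :
    Function.Injective fun x : Σ d : m.divisors, UnorderedFactorization (m / d) =>
      consMulPrime hp x.1 x.2 := by
  rintro ⟨d, t⟩ ⟨d', t'⟩ h
  have hst : (p * d) ::ₘ t.1 = (p * d') ::ₘ t'.1 := Subtype.ext_iff.mp h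
  obtain rfl : d = d' := by
    have hmem : p * d ∈ (p * d') ::ₘ t'.1 := hst ▸ Multiset.mem_cons_self _ _
    rcases Multiset.mem_cons.mp hmem with hdd' | hmem
    · exact Subtype.ext (Nat.eq_of_mul_eq_mul_left hp.pos hdd')
    · refine absurd ?_ hpm
      calc p ∣ p * d := dvd_mul_right p d
        _ ∣ t'.1.prod := Multiset.dvd_prod hmem
        _ = m / d' := t'.2.2
        _ ∣ m := Nat.div_dvd_of_dvd (Nat.dvd_of_mem_divisors d'.2)
  obtain rfl : t = t' := Subtype.ext ((Multiset.cons_inj_right _).mp hst)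
  rfl

theorem consMulPrime_surjective :
    Function.Surjective fun x : Σ d : m.divisors, UnorderedFactorization (m / d) =>
      consMulPrime hp x.1 x.2 := by
  rintro ⟨s, hs2, hsprod⟩
  have hm : m ≠ 0 := right_ne_zero_of_mul (pos ⟨_, hs2, hsprod⟩).ne'
  obtain ⟨x, hxs, y, rfl⟩ := hp.prime.exists_mem_multiset_dvd (hsprod ▸ dvd_mul_right p m)
  obtain ⟨s', rfl⟩ := Multiset.exists_cons_of_mem hxs
  rw [Multiset.prod_cons, mul_assoc] at hsprod
  have hys : y * s'.prod = m := Nat.eq_of_mul_eq_mul_left hp.pos hsprod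
  have hy : y ∈ m.divisors := Nat.mem_divisors.2 ⟨Dvd.intro _ hys, hm⟩
  exact ⟨⟨⟨y, hy⟩, ⟨s', fun z hz => hs2 z (Multiset.mem_cons_of_mem hz),
    Nat.eq_div_of_mul_eq_right (Nat.pos_of_mem_divisors hy).ne' hys⟩⟩, rfl⟩

end MulPrime

end UnorderedFactorization

open UnorderedFactorization in
theorem numFactorizations_prime_mul {p m : ℕ} (hp : p.Prime) (hpm : ¬p ∣ m) :
    numFactorizations (p * m) = ∑ d ∈ m.divisors, numFactorizations (m / d) := by
  rw [← card_eq_numFactorizations, ← Nat.card_congr (Equiv.ofBijective _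
    ⟨consMulPrime_injective hp hpm, consMulPrime_surjective hp⟩), Nat.card_sigma,
    Finset.sum_coe_sort m.divisors fun d => Nat.card (UnorderedFactorization (m / d))]
  rfl

theorem numFactorizations_prime_pow {q : ℕ} (hq : q.Prime) (m : ℕ) :
    numFactorizations (q ^ m) = Nat.card (Nat.Partition m) :=
  Nat.card_congr (UnorderedFactorization.primePowEquivPartition hq m)

/-- For distinct primes `p, q` and any `n`,
`p*(p · q^n) = ∑_{i=0}^{n} p(i)`, where `p(i)` is the partition function. -/
theorem stmt13 (p q : ℕ) (hp : p.Prime) (hq : q.Prime) (hpq : p ≠ q) (n : ℕ) :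
    numFactorizations (p * q ^ n) =
      ∑ i ∈ Finset.range (n + 1), Nat.card (Nat.Partition i) := by
  have hpqn : ¬p ∣ q ^ n := fun h =>
    hpq ((Nat.prime_dvd_prime_iff_eq hp hq).mp (hp.dvd_of_dvd_pow h))
  calc numFactorizations (p * q ^ n)
      = ∑ k ∈ Finset.range (n + 1), numFactorizations (q ^ n / q ^ k) := by
        rw [numFactorizations_prime_mul hp hpqn, Nat.divisors_prime_pow hq, Finset.sum_map]
        rfl
    _ = ∑ k ∈ Finset.range (n + 1), Nat.card (Nat.Partition (n - k)) := by
        refine Finset.sum_congr rfl fun k hk => ?_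
        rw [Nat.pow_div (Nat.lt_succ_iff.mp (Finset.mem_range.mp hk)) hq.pos,
          numFactorizations_prime_pow hq]
    _ = ∑ i ∈ Finset.range (n + 1), Nat.card (Nat.Partition i) :=
        Finset.sum_range_reflect (fun i => Nat.card (Nat.Partition i)) (n + 1)
end
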